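/- Let (Ω, F, P) be a probability space, p ∈ [1, ∞), and let ρ1, ρ2 : L^p(Ω, F, P) → ℝ be functionals continuous with respect to the L^p norm. For Z ∈ L^p define V(Z) := inf_{f ∈ A^0_Lip} [ρ1(f(Z)) + ρ2(Z − f(Z))]. If (Z_n)_{n≥1}, Z ∈ L^p satisfy ‖Z_n − Z‖_p → 0, then V(Z_n) → V(Z) as n → ∞. -/

import Mathlib

/-!
A fixed allocation `f` has a cost `ρ1 (f ∘ Z) + ρ2 (Z - f ∘ Z)` that is continuous in `Z`, which
gives upper semicontinuity of the infimum `V`. For lower semicontinuity, `A⁰_Lip` is sequentially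
compact for pointwise convergence (its members are 1-Lipschitz with `|f x| ≤ |x|`, so a diagonal
subsequence converging on `ℚ` converges everywhere), and the cost is jointly sequentially
continuous: if `fₙ → g` pointwise and `Zₙ → Z` in `Lᵖ`, then
`‖fₙ ∘ Zₙ - g ∘ Z‖ₚ ≤ ‖Zₙ - Z‖ₚ + ‖fₙ ∘ Z - g ∘ Z‖ₚ`, and the last term tends to `0` by dominated
convergence with bound `2|Z|`. Near-optimal allocations for `Zₙ` then have a limit point whose
cost at `Z` bounds `V Z` from above. The same compactness shows that the infimum is finite.
-/

open MeasureTheory Filter Topology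
open scoped ENNReal NNReal

/-- The set `A⁰_Lip` of normalized Lipschitz allocations. -/
def IsA0Lip (f : ℝ → ℝ) : Prop :=
  f 0 = 0 ∧ LipschitzWith 1 f ∧ LipschitzWith 1 (fun x => x - f x)

/-- Sequential continuity of a functional with respect to the `L^p` norm. -/
def LpSeqContinuous {Ω : Type*} [MeasurableSpace Ω] (μ : MeasureTheory.Measure Ω)
    (p : ℝ≥0∞) (ρ : (Ω → ℝ) → ℝ) : Prop :=
  ∀ (Y : ℕ → Ω → ℝ) (Z : Ω → ℝ), (∀ n, MemLp (Y n) p μ) → MemLp Z p μ →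
    Filter.Tendsto (fun n => eLpNorm (Y n - Z) p μ) Filter.atTop (nhds 0) →
    Filter.Tendsto (fun n => ρ (Y n)) Filter.atTop (nhds (ρ Z))

/-- The value function `V(Z) = inf_{f ∈ A⁰_Lip} [ρ1(f(Z)) + ρ2(Z - f(Z))]`. -/
noncomputable def riskSharingValue {Ω : Type*} [MeasurableSpace Ω]
    (ρ1 ρ2 : (Ω → ℝ) → ℝ) (Z : Ω → ℝ) : ℝ :=
  sInf {r : ℝ | ∃ f : ℝ → ℝ, IsA0Lip f ∧
    r = ρ1 (fun ω => f (Z ω)) + ρ2 (fun ω => Z ω - f (Z ω))}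

theorem LipschitzWith.cauchySeq_apply_of_dense {X α ι : Type*} [PseudoMetricSpace X]
    [PseudoMetricSpace α] [Nonempty ι] [SemilatticeSup ι] {K : ℝ≥0} {F : ι → X → α}
    (hF : ∀ i, LipschitzWith K (F i)) {s : Set X} (hs : Dense s)
    (hFs : ∀ y ∈ s, CauchySeq (F · y)) (x : X) : CauchySeq (F · x) := by
  rw [Metric.cauchySeq_iff]
  intro ε hε
  have hnear : ∀ᶠ y in 𝓝 x, K * dist x y < ε / 3 := by
    have : Tendsto (fun y => K * dist x y) (𝓝 x) (𝓝 (K * dist x x)) :=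
      tendsto_const_nhds.mul (tendsto_const_nhds.dist tendsto_id)
    rw [dist_self, mul_zero] at this
    exact this.eventually (gt_mem_nhds (by positivity))
  obtain ⟨y, hxy, hys⟩ := (hnear.and_frequently (mem_closure_iff_frequently.1 (hs x))).exists
  obtain ⟨N, hN⟩ := Metric.cauchySeq_iff.1 (hFs y hys) (ε / 3) (by positivity)
  refine ⟨N, fun m hm n hn => ?_⟩
  calc dist (F m x) (F n x) ≤ dist (F m x) (F m y) + dist (F m y) (F n y) + dist (F n y) (F n x) :=
        dist_triangle4 _ _ _ _
    _ ≤ K * dist x y + dist (F m y) (F n y) + K * dist y x := by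
        gcongr
        exacts [(hF m).dist_le_mul x y, (hF n).dist_le_mul y x]
    _ < ε := by rw [dist_comm y x]; linarith [hN m hm n hn]

theorem tendsto_eLpNorm_of_dominated {α E : Type*} [MeasurableSpace α] {μ : Measure α}
    [NormedAddCommGroup E] {p : ℝ≥0∞} (hp_top : p ≠ ∞) {F : ℕ → α → E} {bound : α → ℝ}
    (hF : ∀ n, AEStronglyMeasurable (F n) μ) (hbound : MemLp bound p μ)
    (hle : ∀ n, ∀ᵐ ω ∂μ, ‖F n ω‖ ≤ bound ω) (hlim : ∀ᵐ ω ∂μ, Tendsto (F · ω) atTop (𝓝 0)) :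
    Tendsto (fun n => eLpNorm (F n) p μ) atTop (𝓝 0) := by
  rcases eq_or_ne p 0 with rfl | hp0
  · simp
  have hp_pos : 0 < p.toReal := ENNReal.toReal_pos hp0 hp_top
  have hrpow : Tendsto (fun x : ℝ≥0∞ => x ^ p.toReal) (𝓝 0) (𝓝 0) := by
    simpa [ENNReal.zero_rpow_of_pos hp_pos] using
      (ENNReal.continuous_rpow_const (y := p.toReal)).tendsto 0
  have hint : Tendsto (fun n => ∫⁻ ω, ‖F n ω‖ₑ ^ p.toReal ∂μ) atTop (𝓝 0) := by
    simpa using tendsto_lintegral_of_dominated_convergence'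
      (F := fun n ω => ‖F n ω‖ₑ ^ p.toReal) (f := 0) (fun ω => ‖bound ω‖ₑ ^ p.toReal)
      (fun n => (hF n).enorm.pow_const _)
      (fun n => (hle n).mono fun ω h =>
        ENNReal.rpow_le_rpow (enorm_le_iff_norm_le.2 (h.trans (le_abs_self _))) hp_pos.le)
      (lintegral_rpow_enorm_lt_top_of_eLpNorm_lt_top hp0 hp_top hbound.2).ne
      (hlim.mono fun ω h => hrpow.comp ((continuous_enorm.tendsto' 0 0 enorm_zero).comp h))
  have := ((ENNReal.continuous_rpow_const (y := 1 / p.toReal)).tendsto 0).comp hint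
  rw [ENNReal.zero_rpow_of_pos (by positivity)] at this
  simp only [eLpNorm_eq_lintegral_rpow_enorm_toReal hp0 hp_top]
  exact this

section LipschitzComp

variable {Ω E F : Type*} [MeasurableSpace Ω] {μ : Measure Ω} [NormedAddCommGroup E]
  [NormedAddCommGroup F] {p : ℝ≥0∞} {K : ℝ≥0}

theorem LipschitzWith.eLpNorm_comp_sub_comp_le {f : E → F} (hf : LipschitzWith K f)
    (Y X : Ω → E) : eLpNorm (f ∘ Y - f ∘ X) p μ ≤ K * eLpNorm (Y - X) p μ :=
  eLpNorm_le_mul_eLpNorm_of_ae_le_mul'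
    (Eventually.of_forall fun ω => by simpa [edist_eq_enorm_sub] using hf (Y ω) (X ω)) p

theorem tendsto_eLpNorm_comp_sub_comp (hp : 1 ≤ p) (hp_top : p ≠ ∞) {f : ℕ → E → F}
    {g : E → F} (hf : ∀ n, LipschitzWith K (f n)) (hf0 : ∀ n, f n 0 = 0)
    (hg : LipschitzWith K g) (hg0 : g 0 = 0) (hfg : ∀ x, Tendsto (f · x) atTop (𝓝 (g x)))
    {Y : ℕ → Ω → E} {X : Ω → E} (hY : ∀ n, AEStronglyMeasurable (Y n) μ) (hX : MemLp X p μ)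
    (hYX : Tendsto (fun n => eLpNorm (Y n - X) p μ) atTop (𝓝 0)) :
    Tendsto (fun n => eLpNorm (f n ∘ Y n - g ∘ X) p μ) atTop (𝓝 0) := by
  have hmeas : ∀ {h : E → F} {W : Ω → E}, LipschitzWith K h → AEStronglyMeasurable W μ →
      AEStronglyMeasurable (h ∘ W) μ := fun hh hW => hh.continuous.comp_aestronglyMeasurable hW
  have hdom : Tendsto (fun n => eLpNorm (f n ∘ X - g ∘ X) p μ) atTop (𝓝 0) := by
    refine tendsto_eLpNorm_of_dominated hp_top (fun n => (hmeas (hf n) hX.1).sub (hmeas hg hX.1))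
      (hX.norm.const_mul (2 * K)) (fun n => Eventually.of_forall fun ω => ?_)
      (Eventually.of_forall fun ω => ?_)
    · calc ‖f n (X ω) - g (X ω)‖ ≤ ‖f n (X ω)‖ + ‖g (X ω)‖ := norm_sub_le _ _
        _ ≤ K * ‖X ω‖ + K * ‖X ω‖ :=
          add_le_add ((hf n).norm_le_mul (hf0 n) _) (hg.norm_le_mul hg0 _)
        _ = 2 * K * ‖X ω‖ := by ring
    · simpa using (hfg (X ω)).sub_const (g (X ω))
  have hsplit : ∀ n, eLpNorm (f n ∘ Y n - g ∘ X) p μ ≤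
      K * eLpNorm (Y n - X) p μ + eLpNorm (f n ∘ X - g ∘ X) p μ := fun n =>
    calc eLpNorm (f n ∘ Y n - g ∘ X) p μ
        = eLpNorm ((f n ∘ Y n - f n ∘ X) + (f n ∘ X - g ∘ X)) p μ := by
          rw [sub_add_sub_cancel]
      _ ≤ eLpNorm (f n ∘ Y n - f n ∘ X) p μ + eLpNorm (f n ∘ X - g ∘ X) p μ :=
          eLpNorm_add_le ((hmeas (hf n) (hY n)).sub (hmeas (hf n) hX.1))
            ((hmeas (hf n) hX.1).sub (hmeas hg hX.1)) hp
      _ ≤ K * eLpNorm (Y n - X) p μ + eLpNorm (f n ∘ X - g ∘ X) p μ := by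
          gcongr; exact (hf n).eLpNorm_comp_sub_comp_le _ _
  have hbound : Tendsto (fun n => K * eLpNorm (Y n - X) p μ + eLpNorm (f n ∘ X - g ∘ X) p μ)
      atTop (𝓝 0) := by
    simpa using (ENNReal.Tendsto.const_mul hYX (Or.inr ENNReal.coe_ne_top)).add hdom
  exact tendsto_of_tendsto_of_tendsto_of_le_of_le tendsto_const_nhds hbound (fun _ => zero_le)
    hsplit

end LipschitzComp

theorem isClosed_setOf_isA0Lip : IsClosed {f : ℝ → ℝ | IsA0Lip f} :=
  (isClosed_eq (continuous_apply 0) continuous_const).inter <|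
    (isClosed_setOfPred_lipschitzWith 1).inter <|
      (isClosed_setOfPred_lipschitzWith 1).preimage <|
        continuous_pi fun x => continuous_const.sub (continuous_apply x)

theorem isA0Lip_zero : IsA0Lip fun _ => 0 :=
  ⟨rfl, LipschitzWith.const' 0, by simp only [sub_zero]; exact LipschitzWith.id⟩

namespace IsA0Lip

variable {f : ℝ → ℝ}

theorem lipschitzWith (hf : IsA0Lip f) : LipschitzWith 1 f := hf.2.1

theorem sub (hf : IsA0Lip f) : IsA0Lip (fun x => x - f x) :=
  ⟨by simp [hf.1], hf.2.2, by simpa using hf.2.1⟩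

theorem abs_le (hf : IsA0Lip f) (x : ℝ) : |f x| ≤ |x| := by
  simpa [hf.1] using hf.lipschitzWith.norm_le_mul hf.1 x

theorem exists_subseq_tendsto {f : ℕ → ℝ → ℝ} (hf : ∀ n, IsA0Lip (f n)) :
    ∃ (φ : ℕ → ℕ) (g : ℝ → ℝ), StrictMono φ ∧ IsA0Lip g ∧
      ∀ x, Tendsto (fun n => f (φ n) x) atTop (𝓝 (g x)) := by
  obtain ⟨_, -, φ, hφ, hφ_tendsto⟩ :=
    (isCompact_univ_pi fun q : ℚ => isCompact_Icc (a := -|(q : ℝ)|) (b := |(q : ℝ)|)).tendsto_subseq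
      (x := fun n (q : ℚ) => f n q) fun n q _ => _root_.abs_le.1 ((hf n).abs_le q)
  have hcauchy : ∀ x, CauchySeq fun n => f (φ n) x :=
    LipschitzWith.cauchySeq_apply_of_dense (fun n => (hf (φ n)).lipschitzWith) Rat.denseRange_cast
      (by rintro _ ⟨q, rfl⟩; exact (tendsto_pi_nhds.1 hφ_tendsto q).cauchySeq)
  choose g hg using fun x => cauchySeq_tendsto_of_complete (hcauchy x)
  exact ⟨φ, g, hφ, isClosed_setOf_isA0Lip.mem_of_tendsto (tendsto_pi_nhds.2 hg)
    (Eventually.of_forall fun n => hf (φ n)), hg⟩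

end IsA0Lip

section RiskSharing

variable {Ω : Type*} [MeasurableSpace Ω] {μ : Measure Ω} {p : ℝ≥0∞} {ρ1 ρ2 : (Ω → ℝ) → ℝ}

def riskSharingCost (ρ1 ρ2 : (Ω → ℝ) → ℝ) (f : ℝ → ℝ) (Z : Ω → ℝ) : ℝ :=
  ρ1 (fun ω => f (Z ω)) + ρ2 (fun ω => Z ω - f (Z ω))

theorem riskSharingValue_eq_sInf_image (ρ1 ρ2 : (Ω → ℝ) → ℝ) (Z : Ω → ℝ) :
    riskSharingValue ρ1 ρ2 Z = sInf ((riskSharingCost ρ1 ρ2 · Z) '' {f | IsA0Lip f}) := by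
  simp only [riskSharingValue, riskSharingCost, Set.image, Set.mem_ofPred_eq, eq_comm]

theorem exists_riskSharingCost_lt {Z : Ω → ℝ} {a : ℝ} (h : riskSharingValue ρ1 ρ2 Z < a) :
    ∃ f, IsA0Lip f ∧ riskSharingCost ρ1 ρ2 f Z < a := by
  rw [riskSharingValue_eq_sInf_image] at h
  obtain ⟨_, ⟨f, hf, rfl⟩, hlt⟩ :=
    exists_lt_of_csInf_lt (Set.image_nonempty.2 ⟨0, isA0Lip_zero⟩) h
  exact ⟨f, hf, hlt⟩

variable (hp : 1 ≤ p) (hp_top : p ≠ ∞) (h1 : LpSeqContinuous μ p ρ1)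
  (h2 : LpSeqContinuous μ p ρ2)
include hp hp_top h1 h2

theorem tendsto_riskSharingCost {f : ℕ → ℝ → ℝ} {g : ℝ → ℝ} (hf : ∀ n, IsA0Lip (f n))
    (hg : IsA0Lip g) (hfg : ∀ x, Tendsto (f · x) atTop (𝓝 (g x))) {Y : ℕ → Ω → ℝ}
    {X : Ω → ℝ} (hY : ∀ n, MemLp (Y n) p μ) (hX : MemLp X p μ)
    (hYX : Tendsto (fun n => eLpNorm (Y n - X) p μ) atTop (𝓝 0)) :
    Tendsto (fun n => riskSharingCost ρ1 ρ2 (f n) (Y n)) atTop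
      (𝓝 (riskSharingCost ρ1 ρ2 g X)) := by
  have hfg' : ∀ x, Tendsto (fun n => x - f n x) atTop (𝓝 (x - g x)) := fun x =>
    (hfg x).const_sub x
  refine (h1 _ _ (fun n => (hf n).lipschitzWith.comp_memLp (hf n).1 (hY n))
      (hg.lipschitzWith.comp_memLp hg.1 hX) ?_).add
    (h2 _ _ (fun n => (hf n).sub.lipschitzWith.comp_memLp (hf n).sub.1 (hY n))
      (hg.sub.lipschitzWith.comp_memLp hg.sub.1 hX) ?_)
  · exact tendsto_eLpNorm_comp_sub_comp hp hp_top (fun n => (hf n).lipschitzWith)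
      (fun n => (hf n).1) hg.lipschitzWith hg.1 hfg (fun n => (hY n).1) hX hYX
  · exact tendsto_eLpNorm_comp_sub_comp hp hp_top (fun n => (hf n).sub.lipschitzWith)
      (fun n => (hf n).sub.1) hg.sub.lipschitzWith hg.sub.1 hfg' (fun n => (hY n).1) hX hYX

theorem bddBelow_riskSharingCost {Z : Ω → ℝ} (hZ : MemLp Z p μ) :
    BddBelow ((riskSharingCost ρ1 ρ2 · Z) '' {f | IsA0Lip f}) := by
  by_contra hnb
  have hunbdd : ∀ n : ℕ, ∃ f, IsA0Lip f ∧ riskSharingCost ρ1 ρ2 f Z < -n := fun n => by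
    obtain ⟨_, ⟨f, hf, rfl⟩, hlt⟩ := not_bddBelow_iff.1 hnb (-n)
    exact ⟨f, hf, hlt⟩
  choose f hf hlt using hunbdd
  obtain ⟨φ, g, hφ, hg, hfg⟩ := IsA0Lip.exists_subseq_tendsto hf
  have hbot : Tendsto (fun n => riskSharingCost ρ1 ρ2 (f (φ n)) Z) atTop atBot :=
    tendsto_atBot_mono (fun n => (hlt (φ n)).le)
      (tendsto_neg_atTop_atBot.comp (tendsto_natCast_atTop_atTop.comp hφ.tendsto_atTop))
  exact not_tendsto_nhds_of_tendsto_atBot hbot _ <|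
    tendsto_riskSharingCost hp hp_top h1 h2 (fun n => hf (φ n)) hg hfg (fun _ => hZ) hZ
      (by simp)

theorem riskSharingValue_le_riskSharingCost {Z : Ω → ℝ} (hZ : MemLp Z p μ) {f : ℝ → ℝ}
    (hf : IsA0Lip f) : riskSharingValue ρ1 ρ2 Z ≤ riskSharingCost ρ1 ρ2 f Z := by
  rw [riskSharingValue_eq_sInf_image]
  exact csInf_le (bddBelow_riskSharingCost hp hp_top h1 h2 hZ) ⟨f, hf, rfl⟩

theorem riskSharingValue_le_of_tendsto {Y : ℕ → Ω → ℝ} {X : Ω → ℝ} (hY : ∀ n, MemLp (Y n) p μ)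
    (hX : MemLp X p μ) (hYX : Tendsto (fun n => eLpNorm (Y n - X) p μ) atTop (𝓝 0)) {a : ℝ}
    (hlt : ∀ n, riskSharingValue ρ1 ρ2 (Y n) < a) : riskSharingValue ρ1 ρ2 X ≤ a := by
  have hnear : ∀ n, ∃ f, IsA0Lip f ∧ riskSharingCost ρ1 ρ2 f (Y n) < a := fun n =>
    exists_riskSharingCost_lt (hlt n)
  choose f hf hfa using hnear
  obtain ⟨φ, g, hφ, hg, hfg⟩ := IsA0Lip.exists_subseq_tendsto hf
  have hcost := tendsto_riskSharingCost hp hp_top h1 h2 (fun n => hf (φ n)) hg hfg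
    (fun n => hY (φ n)) hX (hYX.comp hφ.tendsto_atTop)
  exact (riskSharingValue_le_riskSharingCost hp hp_top h1 h2 hX hg).trans <|
    le_of_tendsto' hcost fun n => (hfa (φ n)).le

end RiskSharing

theorem riskSharingValue_continuous_general
    {Ω : Type*} [MeasurableSpace Ω] (μ : MeasureTheory.Measure Ω)
    (p : ℝ≥0∞) (hp : 1 ≤ p) (hp_top : p ≠ ∞)
    (ρ1 ρ2 : (Ω → ℝ) → ℝ)
    (h1 : LpSeqContinuous μ p ρ1) (h2 : LpSeqContinuous μ p ρ2)
    (Z : ℕ → Ω → ℝ) (Zlim : Ω → ℝ)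
    (hZn : ∀ n, MemLp (Z n) p μ) (hZ : MemLp Zlim p μ)
    (hZconv : Filter.Tendsto (fun n => eLpNorm (Z n - Zlim) p μ) Filter.atTop (nhds 0)) :
    Filter.Tendsto (fun n => riskSharingValue ρ1 ρ2 (Z n)) Filter.atTop
      (nhds (riskSharingValue ρ1 ρ2 Zlim)) := by
  refine tendsto_order.2 ⟨fun a ha => ?_, fun b hb => ?_⟩
  · obtain ⟨a', ha', ha'V⟩ := exists_between ha
    by_contra hfreq
    obtain ⟨ψ, hψ, hψa⟩ := extraction_of_frequently_atTop (not_eventually.1 hfreq)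
    have hVa' : riskSharingValue ρ1 ρ2 Zlim ≤ a' :=
      riskSharingValue_le_of_tendsto hp hp_top h1 h2 (fun n => hZn (ψ n)) hZ
        (hZconv.comp hψ.tendsto_atTop) fun n => (not_lt.1 (hψa n)).trans_lt ha'
    exact hVa'.not_gt ha'V
  · obtain ⟨f, hf, hfb⟩ := exists_riskSharingCost_lt hb
    have hcost := tendsto_riskSharingCost hp hp_top h1 h2 (fun _ => hf) hf
      (fun _ => tendsto_const_nhds) hZn hZ hZconv
    filter_upwards [hcost.eventually_lt_const hfb] with n hn
    exact (riskSharingValue_le_riskSharingCost hp hp_top h1 h2 (hZn n) hf).trans_lt hn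

/-- Continuity of the value function: if `Z_n → Z` in `L^p` then `V(Z_n) → V(Z)`
(Berge's theorem / value convergence part of the main convergence theorem). -/
theorem riskSharingValue_continuous
    {Ω : Type*} [MeasurableSpace Ω] (μ : MeasureTheory.Measure Ω) [IsProbabilityMeasure μ]
    (p : ℝ≥0∞) (hp : 1 ≤ p) (hp_top : p ≠ ∞)
    (ρ1 ρ2 : (Ω → ℝ) → ℝ)
    (h1 : LpSeqContinuous μ p ρ1) (h2 : LpSeqContinuous μ p ρ2)
    (Z : ℕ → Ω → ℝ) (Zlim : Ω → ℝ)
    (hZn : ∀ n, MemLp (Z n) p μ) (hZ : MemLp Zlim p μ)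
    (hZconv : Filter.Tendsto (fun n => eLpNorm (Z n - Zlim) p μ) Filter.atTop (nhds 0)) :
    Filter.Tendsto (fun n => riskSharingValue ρ1 ρ2 (Z n)) Filter.atTop
      (nhds (riskSharingValue ρ1 ρ2 Zlim)) :=
  riskSharingValue_continuous_general μ p hp hp_top ρ1 ρ2 h1 h2 Z Zlim hZn hZ hZconv
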